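/- arXiv:2502.08370 — 11 statements merged into one kernel-verified Lean document; each statement's English description precedes it below -/
import Mathlib

section
/- Let z1, z2 be real numbers with z1 < 0 and z2 < 0, and let s ≥ 1 be a real number. Then the convergence factor of the Parareal/FIE-FIE method with two splitting terms satisfies K_{FIE-FIE}(z1, z2, s) = |(1/((1 − z1/s)(1 − z2/s)))^s − 1/((1 − z1)(1 − z2))| / (1 − |1/((1 − z1)(1 − z2))|) ≤ 1/3. -/
/-!
Write `w = (1 - z₁)(1 - z₂) > 1` for the inverse of the coarse factor and
`P = (1 - z₁/s)^s (1 - z₂/s)^s` for the inverse of the fine one. Bernoulli's inequality and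
`1 + x ≤ eˣ` squeeze each factor of `P` between `1 - zᵢ` and `e^{-zᵢ}`, so
`w ≤ P ≤ e^{-z₁-z₂} ≤ e^{w-1}`. The first bound makes the factor equal to
`(1/w - 1/P)/(1 - 1/w)`, and the second reduces the claim to the one-variable inequality
`4 - w ≤ 3 w e^{1-w}` for `w ≥ 1`, which holds because `3x - (4 - x)e^{x-1}` vanishes at `1`
and has derivative `3 - (3 - x)e^{x-1} ≥ 3 - e > 0`.
-/

open Real

lemma one_add_le_one_add_div_rpow {x s : ℝ} (hs : 1 ≤ s) (hx : -s ≤ x) :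
    1 + x ≤ (1 + x / s) ^ s := by
  have hs0 : 0 < s := by linarith
  have hx' : -1 ≤ x / s := by rwa [le_div_iff₀ hs0, neg_one_mul]
  have h := one_add_mul_self_le_rpow_one_add hx' hs
  rwa [mul_div_cancel₀ x hs0.ne'] at h

lemma one_add_div_rpow_le_exp {x s : ℝ} (hs : 0 < s) (hx : -s ≤ x) :
    (1 + x / s) ^ s ≤ exp x := by
  have hbase : 0 ≤ 1 + x / s := by
    rw [← neg_le_iff_add_nonneg', le_div_iff₀ hs, neg_one_mul]; exact hx
  calc (1 + x / s) ^ s ≤ exp (x / s) ^ s := by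
        gcongr; linarith [add_one_le_exp (x / s)]
    _ = exp x := by rw [← exp_mul, div_mul_cancel₀ x hs.ne']

lemma strictMono_three_mul_sub_four_sub_mul_exp :
    StrictMono fun x : ℝ => 3 * x - (4 - x) * exp (x - 1) := by
  refine strictMono_of_hasDerivAt_pos (f' := fun x => 3 - (3 - x) * exp (x - 1)) (fun x => ?_)
    (fun x => ?_)
  · have hexp : HasDerivAt (fun x : ℝ => exp (x - 1)) (exp (x - 1)) x := by
      simpa using ((hasDerivAt_id x).sub_const 1).exp
    exact (((hasDerivAt_id' x).const_mul 3).sub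
      (((hasDerivAt_id' x).const_sub 4).mul hexp)).congr_deriv (by ring)
  · -- `(3 - x) e^{x-1} ≤ e^{2-x} e^{x-1} = e < 3`
    have h : (3 - x) * exp (x - 1) ≤ exp (2 - x) * exp (x - 1) := by
      gcongr; linarith [add_one_le_exp (2 - x)]
    rw [← exp_add, show 2 - x + (x - 1) = 1 by ring] at h
    linarith [exp_one_lt_three]

lemma four_div_sub_one_le_three_mul_exp {w : ℝ} (hw : 1 ≤ w) :
    4 / w - 1 ≤ 3 * exp (1 - w) := by
  have hw0 : 0 < w := by linarith
  have hmono : 3 * 1 - (4 - 1) * exp (1 - 1) ≤ 3 * w - (4 - w) * exp (w - 1) :=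
    strictMono_three_mul_sub_four_sub_mul_exp.monotone hw
  rw [sub_self, exp_zero] at hmono
  have hinv : exp (1 - w) * exp (w - 1) = 1 := by rw [← exp_add]; norm_num
  rw [div_sub_one hw0.ne', div_le_iff₀ hw0]
  nlinarith [exp_pos (1 - w)]

lemma conv_factor_le_one_third {w P : ℝ} (hw : 1 < w) (hwP : w ≤ P) (hP : P ≤ exp (w - 1)) :
    |1 / P - 1 / w| / (1 - |1 / w|) ≤ 1 / 3 := by
  have hw0 : 0 < w := by linarith
  have hP0 : 0 < P := by linarith
  have hR : 1 / P ≤ 1 / w := one_div_le_one_div_of_le hw0 hwP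
  have hexp : exp (1 - w) ≤ 1 / P := by
    rw [le_one_div (exp_pos _) hP0, one_div, ← exp_neg, neg_sub]; exact hP
  have hkey := four_div_sub_one_le_three_mul_exp hw.le
  have hden : 0 < 1 - 1 / w := by rw [sub_pos, div_lt_one hw0]; exact hw
  rw [abs_of_nonpos (sub_nonpos.2 hR), abs_of_pos (one_div_pos.2 hw0), div_le_iff₀ hden]
  linarith [show 4 / w = 4 * (1 / w) by ring]

/-- Convergence factor bound for the Parareal/FIE-FIE method with two splitting terms. -/
theorem parareal_FIE_FIE_conv_factor_two_terms
    (z1 z2 s : ℝ) (h1 : z1 < 0) (h2 : z2 < 0) (hs : 1 ≤ s) :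
    |(1 / ((1 - z1 / s) * (1 - z2 / s))) ^ s - 1 / ((1 - z1) * (1 - z2))| /
      (1 - |1 / ((1 - z1) * (1 - z2))|) ≤ 1 / 3 := by
  have hs0 : 0 < s := by linarith
  have hz1 : 1 - z1 / s = 1 + -z1 / s := by ring
  have hz2 : 1 - z2 / s = 1 + -z2 / s := by ring
  have hbase1 : 0 ≤ 1 + -z1 / s := by have := div_nonneg (neg_nonneg.2 h1.le) hs0.le; linarith
  have hbase2 : 0 ≤ 1 + -z2 / s := by have := div_nonneg (neg_nonneg.2 h2.le) hs0.le; linarith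
  rw [hz1, hz2, one_div, inv_rpow (mul_nonneg hbase1 hbase2), mul_rpow hbase1 hbase2, ← one_div]
  apply conv_factor_le_one_third (by nlinarith)
  · have e1 := one_add_le_one_add_div_rpow hs (x := -z1) (by linarith)
    have e2 := one_add_le_one_add_div_rpow hs (x := -z2) (by linarith)
    rw [← sub_eq_add_neg] at e1 e2
    exact mul_le_mul e1 e2 (by linarith) (by linarith)
  · have e1 := one_add_div_rpow_le_exp hs0 (x := -z1) (by linarith)
    have e2 := one_add_div_rpow_le_exp hs0 (x := -z2) (by linarith)
    calc _ ≤ exp (-z1) * exp (-z2) := mul_le_mul e1 e2 (by positivity) (exp_pos _).le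
      _ ≤ exp ((1 - z1) * (1 - z2) - 1) := by
        rw [← exp_add]; gcongr; nlinarith
end

section
/- Let M ≥ 2 be an integer, let z1, …, zM be real numbers with zj < 0 for all j, and let s ≥ 1 be a real number. Then the convergence factor of the Parareal/FIE-FIE method with M splitting terms satisfies K_{FIE-FIE}(z1, …, zM, s) = |(∏_{j=1}^M 1/(1 − zj/s))^s − ∏_{j=1}^M 1/(1 − zj)| / (1 − |∏_{j=1}^M 1/(1 − zj)|) ≤ 1/3. -/
/-!
Per factor, Bernoulli's inequality `1 - x ≤ (1 - x/s)^s` puts the fine propagator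
`F = (∏ 1/(1 - z_j/s))^s` below the coarse one `G = ∏ 1/(1 - z_j)`, and `1 + y ≤ eʸ` puts it above
its limit `exp (∑ z_j)` as `s → ∞`. With `X = -∑ z_j` also `G ≤ 1/(1 + X)`, so the factor
`(G - F)/(1 - G)` is at most `1/3` as soon as `4/(1 + X) ≤ 1 + 3e^{-X}`. That follows from the Padé
bound `e^{X/2} ≤ (4 + X)/(4 - X)`, which leaves the polynomial inequality `4X(X - 2)² ≥ 0`.
-/
open Finset Real

theorem Finset.one_add_sum_le_prod_one_add {ι R : Type*} [CommSemiring R] [PartialOrder R]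
    [IsOrderedRing R] (s : Finset ι) {f : ι → R} (hf : ∀ i ∈ s, 0 ≤ f i) :
    1 + ∑ i ∈ s, f i ≤ ∏ i ∈ s, (1 + f i) := by
  induction s using Finset.cons_induction with
  | empty => simp
  | cons a s ha ih =>
    rw [sum_cons, prod_cons]
    have hfa : 0 ≤ f a := hf a (mem_cons_self a s)
    have hsum : 0 ≤ ∑ i ∈ s, f i := sum_nonneg fun i hi => hf i (mem_cons_of_mem hi)
    calc 1 + (f a + ∑ i ∈ s, f i)
        ≤ 1 + (f a + ∑ i ∈ s, f i) + f a * ∑ i ∈ s, f i := le_add_of_nonneg_right (mul_nonneg hfa hsum)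
      _ = (1 + f a) * (1 + ∑ i ∈ s, f i) := by ring
      _ ≤ (1 + f a) * ∏ i ∈ s, (1 + f i) := by
        gcongr
        exacts [add_nonneg zero_le_one hfa, ih fun i hi => hf i (mem_cons_of_mem hi)]

theorem Finset.prod_one_div_one_sub_le {ι : Type*} (s : Finset ι) {x : ι → ℝ}
    (hx : ∀ i ∈ s, x i ≤ 0) : ∏ i ∈ s, 1 / (1 - x i) ≤ 1 / (1 - ∑ i ∈ s, x i) := by
  have hbound : 1 - ∑ i ∈ s, x i ≤ ∏ i ∈ s, (1 - x i) := by
    simpa only [sub_eq_add_neg, sum_neg_distrib] using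
      s.one_add_sum_le_prod_one_add fun i hi => neg_nonneg.2 (hx i hi)
  have hpos : 0 < 1 - ∑ i ∈ s, x i := by
    linarith [sum_nonpos hx]
  rw [prod_div_distrib, prod_const_one]
  exact one_div_le_one_div_of_le hpos hbound

theorem Real.rpow_one_div_one_sub_div_le {x s : ℝ} (hx : x ≤ 0) (hs : 1 ≤ s) :
    (1 / (1 - x / s)) ^ s ≤ 1 / (1 - x) := by
  have hs0 : 0 < s := by linarith
  have hy : 0 ≤ -x / s := div_nonneg (neg_nonneg.2 hx) hs0.le
  have hbernoulli : 1 - x ≤ (1 - x / s) ^ s := by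
    convert one_add_mul_self_le_rpow_one_add (by linarith : -1 ≤ -x / s) hs using 2 <;>
      field_simp <;> ring
  rw [one_div, inv_rpow (by linarith [neg_div s x]), ← one_div]
  exact one_div_le_one_div_of_le (by linarith) hbernoulli

theorem Real.exp_le_rpow_one_div_one_sub_div {x s : ℝ} (hs : 0 < s) (hx : x < s) :
    exp x ≤ (1 / (1 - x / s)) ^ s := by
  have hpos : 0 < 1 - x / s := by rw [sub_pos, div_lt_one hs]; exact hx
  calc exp x = exp (x / s) ^ s := by rw [← exp_mul, div_mul_cancel₀ x hs.ne']
    _ ≤ (1 / (1 - x / s)) ^ s := by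
      gcongr
      rw [le_one_div (exp_pos _) hpos, one_div, ← exp_neg]
      exact one_sub_le_exp_neg _

theorem Real.four_div_one_add_le_one_add_three_mul_exp_neg {X : ℝ} (hX : 0 ≤ X) :
    4 / (1 + X) ≤ 1 + 3 * exp (-X) := by
  rcases lt_or_ge X 4 with hX4 | hX4
  · have hpade : exp (X / 2) ≤ (4 + X) / (4 - X) := by
      have := exp_le_two_add_div_two_sub (x := X / 2) (by positivity) (by linarith)
      rwa [show (2 + X / 2) / (2 - X / 2) = (4 + X) / (4 - X) by
        rw [div_eq_div_iff (by linarith) (by linarith)]; ring] at this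
    have hexp : ((4 - X) / (4 + X)) ^ 2 ≤ exp (-X) := by
      calc ((4 - X) / (4 + X)) ^ 2 = (((4 + X) / (4 - X))⁻¹) ^ 2 := by rw [inv_div]
        _ ≤ ((exp (X / 2))⁻¹) ^ 2 := by
          have : 0 < 4 - X := by linarith
          gcongr
        _ = exp (-X) := by rw [← exp_neg, sq, ← exp_add]; ring_nf
    calc 4 / (1 + X) ≤ 1 + 3 * ((4 - X) / (4 + X)) ^ 2 := by
          rw [← sub_nonneg]
          have : 1 + 3 * ((4 - X) / (4 + X)) ^ 2 - 4 / (1 + X)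
              = 4 * X * (X - 2) ^ 2 / ((4 + X) ^ 2 * (1 + X)) := by
            field_simp
            ring
          rw [this]
          positivity
      _ ≤ 1 + 3 * exp (-X) := by gcongr
  · calc 4 / (1 + X) ≤ 1 := by rw [div_le_one (by positivity)]; linarith
      _ ≤ 1 + 3 * exp (-X) := by have := exp_pos (-X); linarith

open Finset in
theorem parareal_FIE_FIE_conv_factor_M_terms_general
    (M : ℕ) (z : Fin M → ℝ) (hz : ∀ j, z j < 0)
    (s : ℝ) (hs : 1 ≤ s) :
    |(∏ j, 1 / (1 - z j / s)) ^ s - ∏ j, 1 / (1 - z j)| /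
      (1 - |∏ j, 1 / (1 - z j)|) ≤ 1 / 3 := by
  set G := ∏ j, 1 / (1 - z j)
  set F := (∏ j, 1 / (1 - z j / s)) ^ s
  set X := -∑ j, z j
  have hs0 : 0 < s := by linarith
  have hfine : ∀ j, 0 ≤ 1 / (1 - z j / s) := fun j =>
    one_div_nonneg.2 (by linarith [div_neg_of_neg_of_pos (hz j) hs0])
  have hF : F = ∏ j, (1 / (1 - z j / s)) ^ s :=
    (finsetProd_rpow _ _ (fun j _ => hfine j) s).symm
  have hFG : F ≤ G := hF ▸ prod_le_prod (fun j _ => rpow_nonneg (hfine j) s)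
    fun j _ => rpow_one_div_one_sub_div_le (hz j).le hs
  have hexpF : exp (-X) ≤ F := by
    rw [neg_neg, exp_sum, hF]
    exact prod_le_prod (fun j _ => (exp_pos _).le)
      fun j _ => exp_le_rpow_one_div_one_sub_div hs0 (by linarith [hz j])
  have hX : 0 ≤ X := neg_nonneg.2 (sum_nonpos fun j _ => (hz j).le)
  have hG : 4 * G ≤ 4 / (1 + X) := by
    rw [← mul_one_div, ← sub_eq_add_neg]
    gcongr
    exact univ.prod_one_div_one_sub_le fun j _ => (hz j).le
  have hG0 : 0 ≤ G := prod_nonneg fun j _ => one_div_nonneg.2 (by linarith [hz j])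
  have hkey := four_div_one_add_le_one_add_three_mul_exp_neg hX
  rw [abs_of_nonneg hG0, abs_sub_comm, abs_of_nonneg (sub_nonneg.2 hFG)]
  refine div_le_of_le_mul₀ (by linarith) (by norm_num) ?_
  linarith

open Finset in
/-- Convergence factor bound for the Parareal/FIE-FIE method with `M` splitting terms. -/
theorem parareal_FIE_FIE_conv_factor_M_terms
    (M : ℕ) (hM : 2 ≤ M) (z : Fin M → ℝ) (hz : ∀ j, z j < 0)
    (s : ℝ) (hs : 1 ≤ s) :
    |(∏ j, 1 / (1 - z j / s)) ^ s - ∏ j, 1 / (1 - z j)| /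
      (1 - |∏ j, 1 / (1 - z j)|) ≤ 1 / 3 :=
  parareal_FIE_FIE_conv_factor_M_terms_general M z hz s hs
end

section
/- Let z1, z2 be real numbers with z1 < 0 and z2 < 0, and let s ≥ 1 be a real number. Then the convergence factor of the Parareal/FIE-DR method with two splitting terms satisfies K_{FIE-DR}(z1, z2, s) = |(R_DR(z1/s, z2/s))^s − 1/((1 − z1)(1 − z2))| / (1 − |1/((1 − z1)(1 − z2))|) < 1, where R_DR(z1, z2) = 1 + (z1 + z2)/((1 − z1)(1 − z2)). -/
/-!
Both stability functions lie in `(0, 1)` for negative arguments, so with `a = R_FIE(z₁, z₂)`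
the bound `K < 1` amounts to `2a - 1 < R_DR(z₁/s, z₂/s)^s < 1`. The upper bound is immediate.
For the lower one, Bernoulli's inequality gives `R_DR(z₁/s, z₂/s)^s ≥ 1 + z₁ + z₂`, which beats
`2a - 1` as soon as `1 + z₁ + z₂ > 0`; otherwise `(1 - z₁)(1 - z₂) > 2`, so `2a - 1 < 0`.
-/

noncomputable section

namespace Parareal

def fieStab (z₁ z₂ : ℝ) : ℝ := 1 / ((1 - z₁) * (1 - z₂))

def drStab (z₁ z₂ : ℝ) : ℝ := 1 + (z₁ + z₂) / ((1 - z₁) * (1 - z₂))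

def convFactor (RG RF : ℝ → ℝ → ℝ) (z₁ z₂ s : ℝ) : ℝ :=
  |RF (z₁ / s) (z₂ / s) ^ s - RG z₁ z₂| / (1 - |RG z₁ z₂|)

theorem convFactor_lt_one_iff {RG RF : ℝ → ℝ → ℝ} {z₁ z₂ s : ℝ}
    (h₀ : 0 ≤ RG z₁ z₂) (h₁ : RG z₁ z₂ < 1) :
    convFactor RG RF z₁ z₂ s < 1 ↔
      2 * RG z₁ z₂ - 1 < RF (z₁ / s) (z₂ / s) ^ s ∧ RF (z₁ / s) (z₂ / s) ^ s < 1 := by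
  rw [convFactor, abs_of_nonneg h₀, div_lt_one (by linarith), abs_lt]
  constructor <;> rintro ⟨_, _⟩ <;> constructor <;> linarith

variable {x y : ℝ}

theorem one_lt_one_sub_mul_one_sub (hx : x < 0) (hy : y < 0) : 1 < (1 - x) * (1 - y) := by
  nlinarith

theorem fieStab_pos (hx : x < 0) (hy : y < 0) : 0 < fieStab x y :=
  one_div_pos.mpr (one_pos.trans (one_lt_one_sub_mul_one_sub hx hy))

theorem fieStab_lt_one (hx : x < 0) (hy : y < 0) : fieStab x y < 1 :=
  (div_lt_one (one_pos.trans (one_lt_one_sub_mul_one_sub hx hy))).mpr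
    (one_lt_one_sub_mul_one_sub hx hy)

theorem two_mul_fieStab_sub_one_lt (hx : x < 0) (hy : y < 0) (hxy : 0 < 1 + x + y) :
    2 * fieStab x y - 1 < 1 + x + y := by
  have hD := one_lt_one_sub_mul_one_sub hx hy
  have hxy₀ := mul_pos_of_neg_of_neg hx hy
  have : 2 / ((1 - x) * (1 - y)) < 2 + x + y := by
    rw [div_lt_iff₀ (by linarith)]
    nlinarith [mul_pos hxy hxy₀]
  rw [fieStab, mul_one_div]
  linarith

theorem fieStab_lt_half (hx : x < 0) (hy : y < 0) (hxy : 1 + x + y ≤ 0) :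
    fieStab x y < 1 / 2 := by
  rw [fieStab, div_lt_div_iff₀ (by nlinarith) two_pos]
  nlinarith [mul_pos_of_neg_of_neg hx hy]

theorem drStab_eq (hx : x < 0) (hy : y < 0) :
    drStab x y = (1 + x * y) / ((1 - x) * (1 - y)) := by
  have hD := one_lt_one_sub_mul_one_sub hx hy
  rw [drStab, eq_div_iff (by linarith), add_mul, div_mul_cancel₀ _ (by linarith)]
  ring

theorem drStab_pos (hx : x < 0) (hy : y < 0) : 0 < drStab x y := by
  rw [drStab_eq hx hy]
  exact div_pos (by nlinarith) (by nlinarith)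

theorem drStab_lt_one (hx : x < 0) (hy : y < 0) : drStab x y < 1 := by
  have : (x + y) / ((1 - x) * (1 - y)) < 0 := div_neg_of_neg_of_pos (by linarith) (by nlinarith)
  rw [drStab]
  linarith

theorem add_le_drStab_sub_one (hx : x < 0) (hy : y < 0) : x + y ≤ drStab x y - 1 := by
  have hD := one_lt_one_sub_mul_one_sub hx hy
  rw [drStab, add_sub_cancel_left, le_div_iff₀ (by linarith)]
  nlinarith

/-- Bernoulli's inequality, applied to `R_DR = 1 + (R_DR - 1)`. -/
theorem one_add_add_le_drStab_rpow {z₁ z₂ s : ℝ} (h₁ : z₁ < 0) (h₂ : z₂ < 0) (hs : 1 ≤ s) :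
    1 + z₁ + z₂ ≤ drStab (z₁ / s) (z₂ / s) ^ s := by
  have hs₀ : 0 < s := one_pos.trans_le hs
  have hu : z₁ / s < 0 := div_neg_of_neg_of_pos h₁ hs₀
  have hv : z₂ / s < 0 := div_neg_of_neg_of_pos h₂ hs₀
  have hbern := one_add_mul_self_le_rpow_one_add
    (by linarith [drStab_pos hu hv] : -1 ≤ drStab (z₁ / s) (z₂ / s) - 1) hs
  rw [add_sub_cancel] at hbern
  have hscale : s * (z₁ / s + z₂ / s) = z₁ + z₂ := by field_simp
  nlinarith [add_le_drStab_sub_one hu hv]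

theorem two_mul_fieStab_sub_one_lt_drStab_rpow {z₁ z₂ s : ℝ} (h₁ : z₁ < 0) (h₂ : z₂ < 0)
    (hs : 1 ≤ s) : 2 * fieStab z₁ z₂ - 1 < drStab (z₁ / s) (z₂ / s) ^ s := by
  rcases lt_or_ge 0 (1 + z₁ + z₂) with hpos | hnonpos
  · exact (two_mul_fieStab_sub_one_lt h₁ h₂ hpos).trans_le (one_add_add_le_drStab_rpow h₁ h₂ hs)
  · have hs₀ : 0 < s := one_pos.trans_le hs
    have hR := drStab_pos (div_neg_of_neg_of_pos h₁ hs₀) (div_neg_of_neg_of_pos h₂ hs₀)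
    linarith [fieStab_lt_half h₁ h₂ hnonpos, Real.rpow_pos_of_pos hR s]

theorem convFactor_fieStab_drStab_lt_one {z₁ z₂ s : ℝ} (h₁ : z₁ < 0) (h₂ : z₂ < 0)
    (hs : 1 ≤ s) : convFactor fieStab drStab z₁ z₂ s < 1 := by
  have hs₀ : 0 < s := one_pos.trans_le hs
  have hu : z₁ / s < 0 := div_neg_of_neg_of_pos h₁ hs₀
  have hv : z₂ / s < 0 := div_neg_of_neg_of_pos h₂ hs₀
  rw [convFactor_lt_one_iff (fieStab_pos h₁ h₂).le (fieStab_lt_one h₁ h₂)]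
  exact ⟨two_mul_fieStab_sub_one_lt_drStab_rpow h₁ h₂ hs,
    Real.rpow_lt_one (drStab_pos hu hv).le (drStab_lt_one hu hv) hs₀⟩

end Parareal

end

/-- Convergence factor bound for the Parareal/FIE-DR method with two splitting terms. -/
theorem parareal_FIE_DR_conv_factor_two_terms
    (z1 z2 s : ℝ) (h1 : z1 < 0) (h2 : z2 < 0) (hs : 1 ≤ s) :
    |(1 + (z1 / s + z2 / s) / ((1 - z1 / s) * (1 - z2 / s))) ^ s -
        1 / ((1 - z1) * (1 - z2))| /
      (1 - |1 / ((1 - z1) * (1 - z2))|) < 1 :=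
  Parareal.convFactor_fieStab_drStab_lt_one h1 h2 hs
end

section
/- For every fixed real number z < 0, the function G(s) = (1 − z/s)^{−s} is strictly monotonically decreasing on the interval [1, ∞). -/
/-!
Writing `(1 - z/s)^(-s) = exp (-(s * log (1 - z/s)))`, it suffices that `s * log (1 - z/s)`
increases. For `0 < a < b`, the point `1 - z/b` is the convex combination
`(a/b) (1 - z/a) + (1 - a/b) · 1`, so strict concavity of `log` and `log 1 = 0` give
`log (1 - z/b) > (a/b) log (1 - z/a)`.
-/

open Real Set

lemma one_sub_div_pos_of_neg {z s : ℝ} (hz : z < 0) (hs : 0 < s) : 0 < 1 - z / s := by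
  linarith [div_neg_of_neg_of_pos hz hs]

theorem strictMonoOn_mul_log_one_sub_div {z : ℝ} (hz : z < 0) :
    StrictMonoOn (fun s : ℝ => s * log (1 - z / s)) (Ioi 0) := by
  intro a (ha : 0 < a) b (hb : 0 < b) hab
  have hxy : 1 - z / a ≠ 1 := by simp [hz.ne, ha.ne']
  have hconc := strictConcaveOn_log_Ioi.2 (one_sub_div_pos_of_neg hz ha) (mem_Ioi.2 one_pos) hxy
    (div_pos ha hb) (sub_pos.2 ((div_lt_one hb).2 hab)) (add_sub_cancel _ _)
  have hcomb : a / b * (1 - z / a) + (1 - a / b) * 1 = 1 - z / b := by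
    field_simp; ring
  simp only [smul_eq_mul, log_one, mul_zero, add_zero, hcomb] at hconc
  calc a * log (1 - z / a) = b * (a / b * log (1 - z / a)) := by field_simp
    _ < b * log (1 - z / b) := mul_lt_mul_of_pos_left hconc hb

/-- For fixed `z < 0`, the function `s ↦ (1 - z/s)^(-s)` is strictly decreasing on `[1, ∞)`. -/
theorem strictAntiOn_G_of_neg (z : ℝ) (hz : z < 0) :
    StrictAntiOn (fun s : ℝ => (1 - z / s) ^ (-s)) (Set.Ici (1 : ℝ)) := by
  intro a (ha : 1 ≤ a) b (hb : 1 ≤ b) hab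
  have ha0 : 0 < a := by linarith
  have hb0 : 0 < b := by linarith
  have hmono := strictMonoOn_mul_log_one_sub_div hz ha0 hb0 hab
  simp only
  rw [rpow_def_of_pos (one_sub_div_pos_of_neg hz ha0), rpow_def_of_pos (one_sub_div_pos_of_neg hz hb0)]
  exact exp_lt_exp.2 (by linarith)
end

section
/- Let z1, z2 be real numbers with z1 < 0 and z2 < 0. Then lim_{s → ∞} ((1 − z1/s)(1 − z2/s))^{−s} = e^{z1 + z2}, and consequently ((1 − z1/s)(1 − z2/s))^{−s} > e^{z1 + z2} for every real s ≥ 1. -/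
open Filter Topology Real

theorem Real.tendsto_one_sub_div_rpow_neg_atTop (z : ℝ) :
    Tendsto (fun s : ℝ => (1 - z / s) ^ (-s)) atTop (𝓝 (exp z)) := by
  have hlim := (tendsto_one_add_div_rpow_exp (-z)).inv₀ (exp_ne_zero _)
  rw [← exp_neg, neg_neg] at hlim
  have hbase : Tendsto (fun s : ℝ => 1 + -z / s) atTop (𝓝 1) := by
    simpa using tendsto_const_nhds.add ((tendsto_const_nhds (x := -z)).div_atTop tendsto_id)
  refine hlim.congr' ?_
  filter_upwards [hbase.eventually_const_lt one_pos] with s hs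
  rw [← rpow_neg hs.le, neg_div, ← sub_eq_add_neg]

/-- From `log x < x - 1`, which is strict for `x ≠ 1`. -/
theorem Real.exp_lt_one_sub_div_rpow_neg {z s : ℝ} (hz : z ≠ 0) (hs : 0 < s) (hzs : z < s) :
    exp z < (1 - z / s) ^ (-s) := by
  have hpos : 0 < 1 - z / s := sub_pos.mpr ((div_lt_one hs).mpr hzs)
  have hne : 1 - z / s ≠ 1 := by simpa [sub_eq_self] using div_ne_zero hz hs.ne'
  have hlog := mul_lt_mul_of_pos_left (log_lt_sub_one_of_pos hpos hne) hs
  have hcancel : s * (1 - z / s - 1) = -z := by field_simp; ring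
  rw [rpow_def_of_pos hpos, exp_lt_exp]
  linarith

/-- Limit of `((1 - z1/s)(1 - z2/s))^(-s)` as `s → ∞`, and the strict lower bound
`e^{z1+z2}` for every `s ≥ 1`. -/
theorem FIE_power_tendsto_exp_and_gt
    (z1 z2 : ℝ) (h1 : z1 < 0) (h2 : z2 < 0) :
    Tendsto (fun s : ℝ => ((1 - z1 / s) * (1 - z2 / s)) ^ (-s)) atTop
      (nhds (Real.exp (z1 + z2))) ∧
    ∀ s : ℝ, 1 ≤ s →
      Real.exp (z1 + z2) < ((1 - z1 / s) * (1 - z2 / s)) ^ (-s) := by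
  have factor_nonneg : ∀ {z s : ℝ}, z < 0 → 0 < s → 0 ≤ 1 - z / s := fun hz hs => by
    linarith [div_neg_of_neg_of_pos hz hs]
  constructor
  · have hmul := (tendsto_one_sub_div_rpow_neg_atTop z1).mul
      (tendsto_one_sub_div_rpow_neg_atTop z2)
    rw [← exp_add] at hmul
    refine hmul.congr' ?_
    filter_upwards [eventually_gt_atTop 0] with s hs
    rw [mul_rpow (factor_nonneg h1 hs) (factor_nonneg h2 hs)]
  · intro s hs
    have hs0 : 0 < s := one_pos.trans_le hs
    rw [mul_rpow (factor_nonneg h1 hs0) (factor_nonneg h2 hs0), exp_add]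
    exact mul_lt_mul'' (exp_lt_one_sub_div_rpow_neg h1.ne hs0 (h1.trans hs0))
      (exp_lt_one_sub_div_rpow_neg h2.ne hs0 (h2.trans hs0)) (exp_pos _).le (exp_pos _).le
end

section
/- Let H(z1, z2) = (1 − z1)(1 − z2)(3 e^{z1 + z2} + 1). Then for all (z1, z2) ∈ [−3, 0]^2 one has 4 = H(0, 0) ≤ H(z1, z2) ≤ H(−3, −3) = 16(1 + 3 e^{−6}). -/
/-!
Put `s = z1 + z2 ∈ [-6, 0]`. Since `z1 z2 ≥ 0` we have `(1 - z1)(1 - z2) ≥ 1 - s`, and by AM-GM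
`(1 - z1)(1 - z2) ≤ (2 - s)² / 4`. This reduces the claim to `(1 - s)(3 eˢ + 1) ≥ 4` for `s ≤ 0`
and to `(2 - s)²(3 eˢ + 1)` being antitone on `s ≤ 0`. Both are monotonicity arguments, the
derivatives being controlled by `(2 - u) eᵘ ≤ e < 3` and `-s eˢ ≤ e⁻¹ < 1/2` respectively.
-/

open Real Set

lemma two_sub_mul_exp_le_exp_one (u : ℝ) : (2 - u) * exp u ≤ exp 1 :=
  calc (2 - u) * exp u ≤ exp (1 - u) * exp u := by
        gcongr
        linarith [add_one_le_exp (1 - u)]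
    _ = exp 1 := by rw [← exp_add, sub_add_cancel]

lemma hasDerivAt_three_add_three_mul_sub_mul_exp (u : ℝ) :
    HasDerivAt (fun u ↦ 3 + 3 * u - (3 - u) * exp u) (3 - (2 - u) * exp u) u := by
  have h := (((hasDerivAt_id' u).const_mul 3).const_add 3).fun_sub
    (((hasDerivAt_const u 3).fun_sub (hasDerivAt_id' u)).fun_mul (hasDerivAt_exp u))
  exact h.congr_deriv (by ring)

lemma three_sub_mul_exp_le {u : ℝ} (hu : 0 ≤ u) : (3 - u) * exp u ≤ 3 + 3 * u := by
  have hmono : Monotone fun u ↦ 3 + 3 * u - (3 - u) * exp u :=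
    monotone_of_hasDerivAt_nonneg hasDerivAt_three_add_three_mul_sub_mul_exp fun u ↦
      sub_nonneg.2 ((two_sub_mul_exp_le_exp_one u).trans exp_one_lt_three.le)
  simpa using hmono hu

lemma four_le_one_sub_mul_three_mul_exp_add_one {s : ℝ} (hs : s ≤ 0) :
    4 ≤ (1 - s) * (3 * exp s + 1) := by
  have h := mul_le_mul_of_nonneg_right (three_sub_mul_exp_le (neg_nonneg.2 hs)) (exp_pos s).le
  rw [mul_assoc, ← exp_add, neg_add_cancel, exp_zero] at h
  linear_combination h

lemma hasDerivAt_two_sub_sq_mul_three_mul_exp_add_one (s : ℝ) :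
    HasDerivAt (fun s ↦ (2 - s) ^ 2 * (3 * exp s + 1)) ((2 - s) * (-3 * s * exp s - 2)) s := by
  have h := (((hasDerivAt_const s 2).fun_sub (hasDerivAt_id' s)).fun_pow 2).fun_mul
    (((hasDerivAt_exp s).const_mul 3).add_const 1)
  exact h.congr_deriv (by ring)

lemma antitoneOn_two_sub_sq_mul_three_mul_exp_add_one :
    AntitoneOn (fun s ↦ (2 - s) ^ 2 * (3 * exp s + 1)) (Iic 0) := by
  refine antitoneOn_of_hasDerivWithinAt_nonpos (convex_Iic 0) (by fun_prop)
    (fun s _ ↦ (hasDerivAt_two_sub_sq_mul_three_mul_exp_add_one s).hasDerivWithinAt)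
    fun s hs ↦ ?_
  rw [interior_Iic, mem_Iio] at hs
  have h := mul_exp_neg_le_exp_neg_one (-s)
  rw [neg_neg] at h
  exact mul_nonpos_of_nonneg_of_nonpos (by linarith) (by linarith [exp_neg_one_lt_half])

/-- Extremal bounds for `H(z1,z2) = (1-z1)(1-z2)(3 e^{z1+z2} + 1)` on `[-3,0]^2`. -/
theorem H_bounds_FIE
    (z1 z2 : ℝ) (h1 : z1 ∈ Set.Icc (-3 : ℝ) 0) (h2 : z2 ∈ Set.Icc (-3 : ℝ) 0) :
    (1 - (0:ℝ)) * (1 - (0:ℝ)) * (3 * Real.exp (0 + 0) + 1) = 4 ∧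
    (1 - (-3:ℝ)) * (1 - (-3:ℝ)) * (3 * Real.exp ((-3) + (-3)) + 1)
      = 16 * (1 + 3 * Real.exp (-6)) ∧
    4 ≤ (1 - z1) * (1 - z2) * (3 * Real.exp (z1 + z2) + 1) ∧
    (1 - z1) * (1 - z2) * (3 * Real.exp (z1 + z2) + 1)
      ≤ 16 * (1 + 3 * Real.exp (-6)) := by
  obtain ⟨h1l, h1u⟩ := h1
  obtain ⟨h2l, h2u⟩ := h2
  refine ⟨by norm_num, by norm_num; ring, ?_, ?_⟩
  · calc 4 ≤ (1 - (z1 + z2)) * (3 * exp (z1 + z2) + 1) :=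
          four_le_one_sub_mul_three_mul_exp_add_one (by linarith)
      _ ≤ (1 - z1) * (1 - z2) * (3 * exp (z1 + z2) + 1) := by gcongr; nlinarith
  · calc (1 - z1) * (1 - z2) * (3 * exp (z1 + z2) + 1)
          ≤ (2 - (z1 + z2)) ^ 2 / 4 * (3 * exp (z1 + z2) + 1) := by
            gcongr
            nlinarith [sq_nonneg (z1 - z2)]
      _ ≤ (2 - (-6)) ^ 2 / 4 * (3 * exp (-6) + 1) := by
            have hanti := antitoneOn_two_sub_sq_mul_three_mul_exp_add_one
              (mem_Iic.2 (by norm_num : (-6 : ℝ) ≤ 0)) (mem_Iic.2 (by linarith : z1 + z2 ≤ 0))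
              (by linarith)
            linarith
      _ = 16 * (1 + 3 * exp (-6)) := by ring
end

section
/- Let z1, z2 be real numbers with z1 < 0 and z2 < 0. Then |R_DR(z1, z2)| < 1, where R_DR(z1, z2) = 1 + (z1 + z2)/((1 − z1)(1 − z2)). Consequently, for every real s ≥ 1, (R_DR(z1/s, z2/s))^s < 1. -/
/-! For `z₁, z₂ < 0` the Douglas–Rachford stability function
`R(z₁, z₂) = (1 + z₁ z₂) / ((1 - z₁)(1 - z₂))` has positive numerator and denominator, so
`R > 0`; and `R - 1 = (z₁ + z₂) / ((1 - z₁)(1 - z₂)) < 0`. Hence `0 < R < 1`, which gives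
`|R| < 1` and, as `z/s < 0` again for `s > 0`, also `R(z₁/s, z₂/s)^s < 1`. -/

noncomputable def drStabilityFunction (z₁ z₂ : ℝ) : ℝ :=
  1 + (z₁ + z₂) / ((1 - z₁) * (1 - z₂))

namespace drStabilityFunction

theorem eq_div {z₁ z₂ : ℝ} (h₁ : z₁ ≠ 1) (h₂ : z₂ ≠ 1) :
    drStabilityFunction z₁ z₂ = (1 + z₁ * z₂) / ((1 - z₁) * (1 - z₂)) := by
  have hd : (1 - z₁) * (1 - z₂) ≠ 0 := mul_ne_zero (sub_ne_zero.2 h₁.symm) (sub_ne_zero.2 h₂.symm)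
  rw [drStabilityFunction, eq_div_iff hd, add_mul, div_mul_cancel₀ _ hd]
  ring

theorem pos {z₁ z₂ : ℝ} (h₁ : z₁ ≤ 0) (h₂ : z₂ ≤ 0) : 0 < drStabilityFunction z₁ z₂ := by
  rw [eq_div (by linarith) (by linarith)]
  exact div_pos (by nlinarith) (by nlinarith)

theorem lt_one {z₁ z₂ : ℝ} (h₁ : z₁ < 0) (h₂ : z₂ < 0) : drStabilityFunction z₁ z₂ < 1 := by
  have hd : 0 < (1 - z₁) * (1 - z₂) := by nlinarith
  have : (z₁ + z₂) / ((1 - z₁) * (1 - z₂)) < 0 := div_neg_of_neg_of_pos (by linarith) hd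
  rw [drStabilityFunction]
  linarith

theorem abs_lt_one {z₁ z₂ : ℝ} (h₁ : z₁ < 0) (h₂ : z₂ < 0) : |drStabilityFunction z₁ z₂| < 1 := by
  rw [abs_of_pos (pos h₁.le h₂.le)]
  exact lt_one h₁ h₂

theorem rpow_lt_one {z₁ z₂ s : ℝ} (h₁ : z₁ < 0) (h₂ : z₂ < 0) (hs : 0 < s) :
    drStabilityFunction z₁ z₂ ^ s < 1 :=
  Real.rpow_lt_one (pos h₁.le h₂.le).le (lt_one h₁ h₂) hs

end drStabilityFunction

/-- `A`-stability of the Douglas–Rachford method on the negative real axis, and the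
consequent bound on the powered stability function. -/
theorem DR_stability_bound (z1 z2 : ℝ) (h1 : z1 < 0) (h2 : z2 < 0) :
    |1 + (z1 + z2) / ((1 - z1) * (1 - z2))| < 1 ∧
    ∀ s : ℝ, 1 ≤ s →
      (1 + (z1 / s + z2 / s) / ((1 - z1 / s) * (1 - z2 / s))) ^ s < 1 := by
  refine ⟨drStabilityFunction.abs_lt_one h1 h2, fun s hs => ?_⟩
  have hs0 : 0 < s := one_pos.trans_le hs
  exact drStabilityFunction.rpow_lt_one (div_neg_of_neg_of_pos h1 hs0)
    (div_neg_of_neg_of_pos h2 hs0) hs0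
end

section
/- Let z1, z2 be real numbers with z1 < 0 and z2 < 0. Then the function G(s) = (R_DR(z1/s, z2/s))^s, where R_DR(z1, z2) = 1 + (z1 + z2)/((1 − z1)(1 − z2)), is strictly monotonically decreasing on [1, ∞), satisfies lim_{s → ∞} G(s) = e^{z1 + z2}, and hence G(s) > e^{z1 + z2} for every real s ≥ 1. -/
/-!
With `p = z1 z2 ≥ 0` and `q = -(z1 + z2) > 0` the base of `G(s)` is `(s² + p) / (s² + q s + p)`,
so `log G(s) = -s log(1 + u(s))` with `u(s) = q s / (s² + p)`. The derivative of
`s log(1 + u(s))` is positive because `log(1 + u) > 2u / (u + 2)`, the first term of the series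
of `log(1 + u)` in powers of `u / (u + 2)`. The limit is the classical `(1 + g s)^s → e^t` when
`s g s → t`, and a strictly decreasing function stays strictly above its limit.
-/

open Filter Real Set Topology

lemma two_mul_div_add_two_lt_log_one_add {a : ℝ} (ha : 0 < a) :
    2 * a / (a + 2) < log (1 + a) := by
  calc 2 * a / (a + 2)
      < ∑ k ∈ Finset.range 2, 2 * (1 / (2 * (k : ℝ) + 1)) * (a / (a + 2)) ^ (2 * k + 1) := by
        simp only [Finset.sum_range_succ, Finset.sum_range_zero]
        norm_num [mul_div_assoc]
        positivity
    _ ≤ log (1 + a) := sum_le_hasSum _ (fun k _ => by positivity) (hasSum_log_one_add ha.le)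

section
variable {p q : ℝ}

lemma hasDerivAt_mul_log_div {s : ℝ} (hN : s ^ 2 + p ≠ 0) (hD : s ^ 2 + q * s + p ≠ 0) :
    HasDerivAt (fun s => s * log ((s ^ 2 + q * s + p) / (s ^ 2 + p)))
      (log ((s ^ 2 + q * s + p) / (s ^ 2 + p))
        - q * s * (s ^ 2 - p) / ((s ^ 2 + p) * (s ^ 2 + q * s + p))) s := by
  have hD' : HasDerivAt (fun s => s ^ 2 + q * s + p) (2 * s + q) s := by
    simpa using (((hasDerivAt_pow 2 s).add ((hasDerivAt_id s).const_mul q)).add_const p)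
  have hN' : HasDerivAt (fun s => s ^ 2 + p) (2 * s) s := by
    simpa using (hasDerivAt_pow 2 s).add_const p
  refine ((hasDerivAt_id s).mul ((hD'.div hN' hN).log (div_ne_zero hD hN))).congr_deriv ?_
  simp only [Pi.div_apply, id]
  field_simp
  ring

lemma mul_div_mul_lt_log_div (hp : 0 ≤ p) (hq : 0 < q) {s : ℝ} (hs : 0 < s) :
    q * s * (s ^ 2 - p) / ((s ^ 2 + p) * (s ^ 2 + q * s + p))
      < log ((s ^ 2 + q * s + p) / (s ^ 2 + p)) := by
  have hN : 0 < s ^ 2 + p := by positivity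
  have hu : 0 < q * s / (s ^ 2 + p) := by positivity
  have hratio : (s ^ 2 + q * s + p) / (s ^ 2 + p) = 1 + q * s / (s ^ 2 + p) := by
    field_simp
    ring
  calc q * s * (s ^ 2 - p) / ((s ^ 2 + p) * (s ^ 2 + q * s + p))
      ≤ 2 * (q * s) / (q * s + 2 * (s ^ 2 + p)) := by
        rw [div_le_div_iff₀ (by positivity) (by positivity)]
        have : 0 < q * s * (4 * (s ^ 2 + p) * p + q * s * (s ^ 2 + 3 * p)) := by positivity
        linarith
    _ = 2 * (q * s / (s ^ 2 + p)) / (q * s / (s ^ 2 + p) + 2) := by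
        field_simp
    _ < log ((s ^ 2 + q * s + p) / (s ^ 2 + p)) := hratio ▸ two_mul_div_add_two_lt_log_one_add hu

lemma strictMonoOn_mul_log_div (hp : 0 ≤ p) (hq : 0 < q) :
    StrictMonoOn (fun s => s * log ((s ^ 2 + q * s + p) / (s ^ 2 + p))) (Ioi 0) := by
  have hderiv (s : ℝ) (hs : 0 < s) :=
    hasDerivAt_mul_log_div (p := p) (q := q) (s := s) (by positivity) (by positivity)
  refine strictMonoOn_of_deriv_pos (convex_Ioi 0)
    (fun s hs => (hderiv s hs).continuousAt.continuousWithinAt) fun s hs => ?_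
  rw [interior_Ioi] at hs
  rw [(hderiv s hs).deriv, sub_pos]
  exact mul_div_mul_lt_log_div hp hq hs

lemma strictAntiOn_div_rpow (hp : 0 ≤ p) (hq : 0 < q) :
    StrictAntiOn (fun s => ((s ^ 2 + p) / (s ^ 2 + q * s + p)) ^ s) (Ioi 0) := by
  refine (exp_strictMono.comp_strictAntiOn (strictMonoOn_mul_log_div hp hq).neg).congr
    fun s (hs : 0 < s) => ?_
  have hD : 0 < s ^ 2 + q * s + p := by positivity
  rw [Function.comp_apply, rpow_def_of_pos (div_pos (by positivity) hD), ← inv_div, log_inv]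
  ring_nf

end

lemma one_add_add_div_mul_eq {z1 z2 s : ℝ} (hs : s ≠ 0) (hs1 : s ≠ z1) (hs2 : s ≠ z2) :
    1 + (z1 / s + z2 / s) / ((1 - z1 / s) * (1 - z2 / s))
      = (s ^ 2 + z1 * z2) / ((s - z1) * (s - z2)) := by
  have h1 : s - z1 ≠ 0 := sub_ne_zero.mpr hs1
  have h2 : s - z2 ≠ 0 := sub_ne_zero.mpr hs2
  field_simp
  ring

lemma tendsto_DR_power_atTop (z1 z2 : ℝ) :
    Tendsto (fun s : ℝ => (1 + (z1 / s + z2 / s) / ((1 - z1 / s) * (1 - z2 / s))) ^ s)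
      atTop (𝓝 (exp (z1 + z2))) := by
  apply tendsto_one_add_rpow_exp_of_tendsto
  have hz : ∀ z : ℝ, Tendsto (fun s : ℝ => 1 - z / s) atTop (𝓝 1) := fun z => by
    simpa using (tendsto_const_nhds (x := (1 : ℝ))).sub
      ((tendsto_const_nhds (x := z)).div_atTop tendsto_id)
  have hlim := (tendsto_const_nhds (x := z1 + z2)).div ((hz z1).mul (hz z2)) (by norm_num)
  rw [mul_one, div_one] at hlim
  refine hlim.congr' ?_
  filter_upwards [eventually_ne_atTop 0] with s hs
  simp only [Pi.div_apply]
  field_simp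

lemma StrictAntiOn.lt_of_tendsto_atTop {α β : Type*} [LinearOrder α] [NoMaxOrder α]
    [TopologicalSpace β] [Preorder β] [OrderClosedTopology β] {f : α → β} {a : α} {L : β}
    (hf : StrictAntiOn f (Ici a)) (hL : Tendsto f atTop (𝓝 L)) {s : α} (hs : a ≤ s) :
    L < f s := by
  have : Nonempty α := ⟨a⟩
  obtain ⟨t, hst⟩ := exists_gt s
  have ht : a ≤ t := hs.trans hst.le
  refine lt_of_le_of_lt (le_of_tendsto hL ?_) (hf hs ht hst)
  filter_upwards [eventually_ge_atTop t] with u hu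
  exact hf.antitoneOn ht (ht.trans hu) hu

open Filter in
/-- The function `G(s) = (R_DR(z1/s, z2/s))^s` is strictly decreasing on `[1, ∞)`,
tends to `e^{z1+z2}` as `s → ∞`, and hence exceeds `e^{z1+z2}` for all `s ≥ 1`. -/
theorem DR_power_decrease_limit_gt (z1 z2 : ℝ) (h1 : z1 < 0) (h2 : z2 < 0) :
    StrictAntiOn
      (fun s : ℝ => (1 + (z1 / s + z2 / s) / ((1 - z1 / s) * (1 - z2 / s))) ^ s)
      (Set.Ici (1 : ℝ)) ∧
    Tendsto
      (fun s : ℝ => (1 + (z1 / s + z2 / s) / ((1 - z1 / s) * (1 - z2 / s))) ^ s)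
      atTop (nhds (Real.exp (z1 + z2))) ∧
    ∀ s : ℝ, 1 ≤ s →
      Real.exp (z1 + z2) <
        (1 + (z1 / s + z2 / s) / ((1 - z1 / s) * (1 - z2 / s))) ^ s := by
  have hanti : StrictAntiOn
      (fun s : ℝ => (1 + (z1 / s + z2 / s) / ((1 - z1 / s) * (1 - z2 / s))) ^ s) (Ioi 0) :=
    (strictAntiOn_div_rpow (q := -(z1 + z2)) (mul_pos_of_neg_of_neg h1 h2).le (by linarith)).congr
      fun s (hs : 0 < s) => by
        rw [one_add_add_div_mul_eq hs.ne' (h1.trans hs).ne' (h2.trans hs).ne']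
        dsimp only
        congr 2
        ring
  have hanti' := hanti.mono fun s (hs : 1 ≤ s) => zero_lt_one.trans_le hs
  have hlim := tendsto_DR_power_atTop z1 z2
  exact ⟨hanti', hlim, fun s hs => hanti'.lt_of_tendsto_atTop hlim hs⟩
end

section
/- For all real numbers z1 < 0 and z2 < 0, the strict inequality e^{z1 + z2} > 2/((1 − z1)(1 − z2)) − 1 holds. -/
/-- Limiting-case inequality for the Parareal/FIE-DR convergence proof. -/
theorem exp_gt_DR_limit (z1 z2 : ℝ) (h1 : z1 < 0) (h2 : z2 < 0) :
    Real.exp (z1 + z2) > 2 / ((1 - z1) * (1 - z2)) - 1 := by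
  have hp1 : (0:ℝ) < 1 - z1 := by linarith
  have hp2 : (0:ℝ) < 1 - z2 := by linarith
  have hz : 0 < z1 * z2 := mul_pos_of_neg_of_neg h1 h2
  have hexp : z1 + z2 + 1 < Real.exp (z1 + z2) :=
    Real.add_one_lt_exp (by intro h; nlinarith)
  have hpos : 0 < Real.exp (z1 + z2) := Real.exp_pos _
  rw [gt_iff_lt, sub_lt_iff_lt_add, div_lt_iff₀ (by positivity)]
  nlinarith [mul_pos hp1 hp2, sq_nonneg (z1 + z2), mul_pos hpos (mul_pos hp1 hp2)]
end

section
/- Let H(z1, z2) = (1 − z1)(1 − z2)(e^{z1 + z2} + 1). Then for all (z1, z2) ∈ [−1, 0)^2 one has 2 = H(0, 0) < H(z1, z2) ≤ H(−1, −1) = 4(1 + e^{−2}). -/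
/-!
Along each coordinate line, `s ↦ (1 - s) * (exp (s + c) + 1)` has derivative
`-1 - s * exp (s + c)`, which is negative for `c < 1` because `-s * exp s ≤ exp (-1)`.
Hence moving `z1` and then `z2` down to `-1` only increases `H`. For the lower bound,
`z1 * z2 > 0` gives `H(z1, z2) > H(z1 + z2, 0)`, and `H(s, 0) > H(0, 0) = 2` for `s < 0`
by the same monotonicity.
-/

open Real Set

theorem hasDerivAt_one_sub_mul_exp_add_add_one (c s : ℝ) :
    HasDerivAt (fun s => (1 - s) * (exp (s + c) + 1)) (-1 - s * exp (s + c)) s := by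
  have hexp : HasDerivAt (fun s => exp (s + c) + 1) (exp (s + c)) s := by
    simpa using (((hasDerivAt_id s).add_const c).exp).add_const 1
  exact (((hasDerivAt_id s).const_sub 1).mul hexp).congr_deriv (by simp only [id]; ring)

theorem strictAnti_one_sub_mul_exp_add_add_one {c : ℝ} (hc : c < 1) :
    StrictAnti fun s => (1 - s) * (exp (s + c) + 1) := by
  refine strictAnti_of_hasDerivAt_neg (hasDerivAt_one_sub_mul_exp_add_add_one c) fun s => ?_
  have hbound : -s * exp (s + c) ≤ exp (c - 1) :=
    calc -s * exp (s + c) = -s * exp (-(-s)) * exp c := by rw [neg_neg, exp_add]; ring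
      _ ≤ exp (-1) * exp c := by gcongr; exact mul_exp_neg_le_exp_neg_one _
      _ = exp (c - 1) := by rw [← exp_add]; ring_nf
  have hlt : exp (c - 1) < 1 := exp_lt_one_iff.2 (by linarith)
  linarith

theorem two_lt_one_sub_mul_exp_add_one {s : ℝ} (hs : s < 0) : 2 < (1 - s) * (exp s + 1) := by
  simpa [one_add_one_eq_two] using strictAnti_one_sub_mul_exp_add_add_one (c := 0) one_pos hs

/-- Extremal bounds for `H(z1,z2) = (1-z1)(1-z2)(e^{z1+z2} + 1)` on `[-1,0)^2`. -/
theorem H_bounds_DR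
    (z1 z2 : ℝ) (h1 : z1 ∈ Set.Ico (-1 : ℝ) 0) (h2 : z2 ∈ Set.Ico (-1 : ℝ) 0) :
    (1 - (0:ℝ)) * (1 - (0:ℝ)) * (Real.exp (0 + 0) + 1) = 2 ∧
    (1 - (-1:ℝ)) * (1 - (-1:ℝ)) * (Real.exp ((-1) + (-1)) + 1)
      = 4 * (1 + Real.exp (-2)) ∧
    2 < (1 - z1) * (1 - z2) * (Real.exp (z1 + z2) + 1) ∧
    (1 - z1) * (1 - z2) * (Real.exp (z1 + z2) + 1) ≤ 4 * (1 + Real.exp (-2)) := by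
  obtain ⟨hz1, hz1_neg⟩ := h1
  obtain ⟨hz2, hz2_neg⟩ := h2
  refine ⟨by norm_num, by norm_num; ring, ?_, ?_⟩
  · have hprod : 1 - (z1 + z2) < (1 - z1) * (1 - z2) := by
      nlinarith [mul_pos_of_neg_of_neg hz1_neg hz2_neg]
    calc 2 < (1 - (z1 + z2)) * (exp (z1 + z2) + 1) := two_lt_one_sub_mul_exp_add_one (by linarith)
      _ ≤ (1 - z1) * (1 - z2) * (exp (z1 + z2) + 1) := by gcongr
  · have hmove_z1 : (1 - z1) * (exp (z1 + z2) + 1) ≤ 2 * (exp (-1 + z2) + 1) := by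
      simpa [one_add_one_eq_two] using
        (strictAnti_one_sub_mul_exp_add_add_one (c := z2) (by linarith)).antitone hz1
    have hmove_z2 : (1 - z2) * (exp (z2 + -1) + 1) ≤ 2 * (exp (-2) + 1) := by
      simpa [one_add_one_eq_two, show (-1 : ℝ) + -1 = -2 by norm_num] using
        (strictAnti_one_sub_mul_exp_add_add_one (c := -1) (by norm_num)).antitone hz2
    calc (1 - z1) * (1 - z2) * (exp (z1 + z2) + 1)
        = (1 - z2) * ((1 - z1) * (exp (z1 + z2) + 1)) := by ring
      _ ≤ (1 - z2) * (2 * (exp (-1 + z2) + 1)) := by gcongr; linarith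
      _ = 2 * ((1 - z2) * (exp (z2 + -1) + 1)) := by rw [add_comm (-1)]; ring
      _ ≤ 2 * (2 * (exp (-2) + 1)) := by gcongr
      _ = 4 * (1 + exp (-2)) := by ring
end

section
/- Let M ≥ 2 be an integer and define H_M(z1, …, zM) = (∏_{j=1}^M (1 − zj)) · (e^{∑_{j=1}^M zj} + 1). Then H_M(z1, …, zM) > 2 for all (z1, …, zM) ∈ [−1, 0)^M. -/
open Finset in
lemma one_add_sum_le_prod_aux {ι : Type*} (s : Finset ι) (f : ι → ℝ)
    (hf : ∀ i ∈ s, 0 ≤ f i) : 1 + ∑ i ∈ s, f i ≤ ∏ i ∈ s, (1 + f i) := by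
  induction s using Finset.cons_induction with
  | empty => simp
  | cons a t hx ih =>
    rw [Finset.sum_cons, Finset.prod_cons]
    have h1 : 0 ≤ f a := hf a (Finset.mem_cons_self a t)
    have h2 : 1 + ∑ i ∈ t, f i ≤ ∏ i ∈ t, (1 + f i) :=
      ih fun i hi => hf i (Finset.mem_cons_of_mem hi)
    have h3 : 0 ≤ ∑ i ∈ t, f i := Finset.sum_nonneg fun i hi => hf i (Finset.mem_cons_of_mem hi)
    nlinarith

open Finset in
/-- Lower bound `H_M > 2` on `[-1,0)^M` for
`H_M(z) = (∏ (1 - zj)) (e^{∑ zj} + 1)`. -/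
theorem H_M_gt_two_DR (M : ℕ) (hM : 2 ≤ M) (z : Fin M → ℝ)
    (hz : ∀ j, z j ∈ Set.Ico (-1 : ℝ) 0) :
    2 < (∏ j, (1 - z j)) * (Real.exp (∑ j, z j) + 1) := by
  set S := ∑ j, z j with hSdef
  have hne : (Finset.univ : Finset (Fin M)).Nonempty := by
    refine Finset.univ_nonempty_iff.mpr ?_
    exact Fin.pos_iff_nonempty.mp (by omega)
  have hS : S < 0 := by
    apply Finset.sum_neg (fun j _ => (hz j).2) hne
  have hP : 1 - S ≤ ∏ j, (1 - z j) := by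
    have := one_add_sum_le_prod_aux Finset.univ (fun j => -z j)
      (fun j _ => by simpa using (hz j).2.le)
    simpa [sub_eq_add_neg, hSdef] using this
  have hE : S + 1 < Real.exp S := Real.add_one_lt_exp (ne_of_lt hS)
  have hEpos : 0 < Real.exp S := Real.exp_pos S
  have hPpos : (0:ℝ) < 1 - S := by linarith
  have key : 2 < (1 - S) * (Real.exp S + 1) := by
    rcases le_or_gt (-1 : ℝ) S with h | h
    · nlinarith
    · nlinarith
  calc 2 < (1 - S) * (Real.exp S + 1) := key
    _ ≤ (∏ j, (1 - z j)) * (Real.exp S + 1) := by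
        apply mul_le_mul_of_nonneg_right hP (by positivity)
end
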